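/- If F ∈ ℂ[x₁,x₂,x₃] is an irreducible homogeneous Darboux polynomial of the Halphen system with d_H(F) = P·F and P = 0, then F is constant; in particular, no irreducible homogeneous Darboux polynomial of the Halphen system has eigenvalue zero. -/

import Mathlib

open MvPolynomial

/-- Components of the Halphen vector field:
`V₁ = x₂x₃ − x₁(x₂+x₃)`, `V₂ = x₃x₁ − x₂(x₃+x₁)`, `V₃ = x₁x₂ − x₃(x₁+x₂)`. -/
noncomputable def V1 : MvPolynomial (Fin 3) ℂ := X 1 * X 2 - X 0 * (X 1 + X 2)
noncomputable def V2 : MvPolynomial (Fin 3) ℂ := X 2 * X 0 - X 1 * (X 2 + X 0)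
noncomputable def V3 : MvPolynomial (Fin 3) ℂ := X 0 * X 1 - X 2 * (X 0 + X 1)

/-- The Halphen derivation `d_H(F) = V₁∂₁F + V₂∂₂F + V₃∂₃F` on `ℂ[x₁,x₂,x₃]`. -/
noncomputable def dH (F : MvPolynomial (Fin 3) ℂ) : MvPolynomial (Fin 3) ℂ :=
  V1 * pderiv 0 F + V2 * pderiv 1 F + V3 * pderiv 2 F

/-! ### Auxiliary lemmas -/

lemma coeff_pderiv (i : Fin 2) (n : Fin 2 →₀ ℕ) (g : MvPolynomial (Fin 2) ℂ) :
    coeff n (pderiv i g) = (n i + 1 : ℂ) * coeff (n + Finsupp.single i 1) g := by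
  induction g using MvPolynomial.induction_on' with
  | add p q hp hq => simp [hp, hq]; ring
  | monomial s a =>
    rw [pderiv_monomial, coeff_monomial, coeff_monomial]
    by_cases h2 : s = n + Finsupp.single i 1
    · have hsub : s - Finsupp.single i 1 = n := by
        ext j
        simp [h2, Finsupp.tsub_apply, Finsupp.single_apply]
      have hsi : s i = n i + 1 := by simp [h2]
      rw [if_pos hsub, if_pos h2, hsi]
      push_cast; ring
    · rw [if_neg h2, mul_zero]
      by_cases h1 : s - Finsupp.single i 1 = n
      · have hsi : s i = 0 := by
          by_contra hne
          exact h2 (by rw [← h1, tsub_add_cancel_of_le (by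
            rwa [Finsupp.single_le_iff, Nat.one_le_iff_ne_zero])])
        rw [if_pos h1, hsi]; simp
      · rw [if_neg h1]

lemma coeff_X_mul_pderiv (i : Fin 2) (n : Fin 2 →₀ ℕ) (g : MvPolynomial (Fin 2) ℂ) :
    coeff n (X i * pderiv i g) = (n i : ℂ) * coeff n g := by
  rw [coeff_X_mul']
  by_cases h : i ∈ n.support
  · rw [if_pos h, coeff_pderiv]
    have hle : 1 ≤ n i := Nat.one_le_iff_ne_zero.mpr (Finsupp.mem_support_iff.mp h)
    have h1 : (n - Finsupp.single i 1 : Fin 2 →₀ ℕ) i + 1 = n i := by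
      rw [Finsupp.tsub_apply, Finsupp.single_eq_same]
      omega
    have h2 : n - Finsupp.single i 1 + Finsupp.single i 1 = n := by
      ext j
      rw [Finsupp.add_apply, Finsupp.tsub_apply]
      rcases eq_or_ne i j with rfl | hij
      · rw [Finsupp.single_eq_same]; omega
      · rw [Finsupp.single_eq_of_ne' hij]; omega
    rw [h2]
    norm_cast
    rw [h1]
  · rw [if_neg h]
    have : n i = 0 := Finsupp.notMem_support_iff.mp h
    rw [this]
    simp

lemma rec_rel (g : MvPolynomial (Fin 2) ℂ) (k : ℕ)
    (E : (X 1 - C 2 * X 0) * pderiv 0 g = C (k : ℂ) * g + X 1 * pderiv 1 g) (A B : ℕ) :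
    ((A + 1 : ℕ) : ℂ) * coeff (Finsupp.single 0 (A+1) + Finsupp.single 1 B) g
      = ((2*A + B + 1 + k : ℕ) : ℂ) * coeff (Finsupp.single 0 A + Finsupp.single 1 (B+1)) g := by
  set n : Fin 2 →₀ ℕ := Finsupp.single 0 A + Finsupp.single 1 (B+1) with hn
  have h := congrArg (coeff n) E
  have e1 : (X 1 - C 2 * X 0) * pderiv 0 g
      = X 1 * pderiv 0 g - C 2 * (X 0 * pderiv 0 g) := by ring
  rw [e1, coeff_sub, coeff_C_mul, coeff_add, coeff_C_mul,
    coeff_X_mul_pderiv, coeff_X_mul_pderiv] at h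
  have hn0 : n 0 = A := by simp [hn, Finsupp.single_apply]
  have hn1 : n 1 = B + 1 := by simp [hn, Finsupp.single_apply]
  have hX1 : coeff n (X 1 * pderiv 0 g)
      = ((A+1 : ℕ) : ℂ) * coeff (Finsupp.single 0 (A+1) + Finsupp.single 1 B) g := by
    have hsplit : n = Finsupp.single 1 1 + (Finsupp.single 0 A + Finsupp.single 1 B) := by
      rw [hn, Finsupp.single_add]; abel
    have hidx : (Finsupp.single 0 A + Finsupp.single 1 B + Finsupp.single 0 1 : Fin 2 →₀ ℕ)
        = Finsupp.single 0 (A+1) + Finsupp.single 1 B := by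
      rw [Finsupp.single_add]; abel
    rw [hsplit, coeff_X_mul, coeff_pderiv, hidx]
    have h0 : ((Finsupp.single 0 A + Finsupp.single 1 B : Fin 2 →₀ ℕ) 0) = A := by
      simp [Finsupp.single_apply]
    rw [h0]
    push_cast
    ring
  rw [hX1, hn0, hn1] at h
  push_cast
  push_cast at h
  linear_combination h

lemma top_rel (g : MvPolynomial (Fin 2) ℂ) (k : ℕ)
    (E : (X 1 - C 2 * X 0) * pderiv 0 g = C (k : ℂ) * g + X 1 * pderiv 1 g) (d : ℕ) :
    ((2*d + k : ℕ) : ℂ) * coeff (Finsupp.single 0 d) g = 0 := by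
  set n : Fin 2 →₀ ℕ := Finsupp.single 0 d with hn
  have h := congrArg (coeff n) E
  have e1 : (X 1 - C 2 * X 0) * pderiv 0 g
      = X 1 * pderiv 0 g - C 2 * (X 0 * pderiv 0 g) := by ring
  rw [e1, coeff_sub, coeff_C_mul, coeff_add, coeff_C_mul,
    coeff_X_mul_pderiv, coeff_X_mul_pderiv] at h
  have hX1 : coeff n (X 1 * pderiv 0 g) = 0 := by
    rw [coeff_X_mul', if_neg]
    simp [hn, Finsupp.single_apply]
  have hn0 : n 0 = d := by simp [hn]
  have hn1 : n 1 = 0 := by simp [hn, Finsupp.single_apply]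
  rw [hX1, hn0, hn1] at h
  push_cast
  push_cast at h
  linear_combination -h

lemma degree_fin2 (n : Fin 2 →₀ ℕ) : n.degree = n 0 + n 1 := by
  rw [Finsupp.degree_apply, Finset.sum_subset (Finset.subset_univ n.support)
    (fun x _ hx => Finsupp.notMem_support_iff.mp hx), Fin.sum_univ_two]

/-- A homogeneous polynomial first integral of the planar system
`ẋ = y² − 2xy`, `ẏ = −y²` (more precisely, a solution of the family of equations
obtained by peeling off powers of `y`) vanishes. -/
lemma twoVar (d : ℕ) (g : MvPolynomial (Fin 2) ℂ) (k : ℕ) (hg : g.IsHomogeneous d)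
    (hkd : 1 ≤ k + d)
    (E : (X 1 - C 2 * X 0) * pderiv 0 g = C (k : ℂ) * g + X 1 * pderiv 1 g) : g = 0 := by
  have main : ∀ j A B, A + B = d → d ≤ A + j →
      coeff (Finsupp.single 0 A + Finsupp.single 1 B) g = 0 := by
    intro j
    induction j with
    | zero =>
      intro A B hAB hle
      have hA : A = d := by omega
      have hB : B = 0 := by omega
      rw [hA, hB, Finsupp.single_zero, add_zero]
      have h := top_rel g k E d
      have hne : ((2*d + k : ℕ) : ℂ) ≠ 0 := Nat.cast_ne_zero.mpr (by omega)
      exact (mul_eq_zero.mp h).resolve_left hne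
    | succ j ih =>
      intro A B hAB hle
      by_cases hle' : d ≤ A + j
      · exact ih A B hAB hle'
      · have hB : B = j + 1 := by omega
        rw [hB]
        have h1 : coeff (Finsupp.single 0 (A+1) + Finsupp.single 1 j) g = 0 :=
          ih (A+1) j (by omega) (by omega)
        have h2 := rec_rel g k E A j
        rw [h1, mul_zero] at h2
        have hne : ((2*A + j + 1 + k : ℕ) : ℂ) ≠ 0 := Nat.cast_ne_zero.mpr (by omega)
        exact (mul_eq_zero.mp h2.symm).resolve_left hne
  rw [eq_zero_iff]
  intro n
  by_cases hdeg : n.degree = d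
  · have hnr : n = Finsupp.single 0 (n 0) + Finsupp.single 1 (n 1) := by
      ext j
      fin_cases j <;> simp [Finsupp.single_apply]
    have hsum : n 0 + n 1 = d := by rw [← degree_fin2]; exact hdeg
    rw [hnr]
    exact main d (n 0) (n 1) hsum (by omega)
  · exact hg.coeff_eq_zero hdeg

/-- The restriction `x₂ := x₃` as a renaming `Fin 3 → Fin 2`. -/
noncomputable def hmap : Fin 3 → Fin 2 := ![0, 1, 1]
@[simp] lemma hmap0 : hmap 0 = 0 := rfl
@[simp] lemma hmap1 : hmap 1 = 1 := rfl
@[simp] lemma hmap2 : hmap 2 = 1 := rfl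

noncomputable def gmap : Fin 3 → Fin 3 := ![0, 2, 2]
noncomputable def emap : Fin 2 → Fin 3 := ![0, 2]

lemma ch0 (F : MvPolynomial (Fin 3) ℂ) :
    pderiv 0 (rename hmap F) = rename hmap (pderiv 0 F) := by
  induction F using MvPolynomial.induction_on with
  | C a => simp
  | add p q hp hq => simp [hp, hq]
  | mul_X p i hp =>
    fin_cases i <;>
      simp [pderiv_mul, hp, map_add, map_mul]

lemma ch1 (F : MvPolynomial (Fin 3) ℂ) :
    pderiv 1 (rename hmap F) = rename hmap (pderiv 1 F) + rename hmap (pderiv 2 F) := by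
  induction F using MvPolynomial.induction_on with
  | C a => simp
  | add p q hp hq => simp [hp, hq]; ring
  | mul_X p i hp =>
    fin_cases i <;>
      simp [pderiv_mul, hp, map_add, map_mul] <;> ring

lemma dvd_sub_g (F : MvPolynomial (Fin 3) ℂ) :
    (X 1 - X 2 : MvPolynomial (Fin 3) ℂ) ∣ F - rename gmap F := by
  induction F using MvPolynomial.induction_on with
  | C a => simp
  | add p q hp hq =>
    have e : p + q - rename gmap (p + q) = (p - rename gmap p) + (q - rename gmap q) := by
      rw [map_add]; ring
    rw [e]; exact dvd_add hp hq
  | mul_X p i hp =>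
    rw [map_mul, rename_X]
    fin_cases i
    · show (X 1 - X 2 : MvPolynomial (Fin 3) ℂ) ∣ p * X 0 - rename gmap p * X (gmap 0)
      have e : p * X 0 - rename gmap p * X (gmap 0) = (p - rename gmap p) * X 0 := by
        show p * X 0 - rename gmap p * X 0 = _
        ring
      rw [e]; exact hp.mul_right _
    · show (X 1 - X 2 : MvPolynomial (Fin 3) ℂ) ∣ p * X 1 - rename gmap p * X (gmap 1)
      have e : p * X 1 - rename gmap p * X (gmap 1)
          = (p - rename gmap p) * X 1 + rename gmap p * (X 1 - X 2) := by
        show p * X 1 - rename gmap p * X 2 = _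
        ring
      rw [e]; exact dvd_add (hp.mul_right _) (dvd_mul_left _ _)
    · show (X 1 - X 2 : MvPolynomial (Fin 3) ℂ) ∣ p * X 2 - rename gmap p * X (gmap 2)
      have e : p * X 2 - rename gmap p * X (gmap 2) = (p - rename gmap p) * X 2 := by
        show p * X 2 - rename gmap p * X 2 = _
        ring
      rw [e]; exact hp.mul_right _

lemma comp_eq : emap ∘ hmap = gmap := by
  funext i; fin_cases i <;> rfl

lemma dvd_of_rename_zero (F : MvPolynomial (Fin 3) ℂ) (h : rename hmap F = 0) :
    (X 1 - X 2 : MvPolynomial (Fin 3) ℂ) ∣ F := by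
  have h2 : rename gmap F = 0 := by
    rw [← comp_eq, ← rename_rename, h, map_zero]
  have := dvd_sub_g F
  rwa [h2, sub_zero] at this

/-- Key step: a homogeneous polynomial of positive degree annihilated by the
Halphen derivation is divisible by `x₂ - x₃`. -/
lemma key (F : MvPolynomial (Fin 3) ℂ) (m : ℕ) (hm : 1 ≤ m)
    (hhom : F.IsHomogeneous m) (hD : dH F = 0) :
    (X 1 - X 2 : MvPolynomial (Fin 3) ℂ) ∣ F := by
  have hf : (rename hmap F).IsHomogeneous m := hhom.rename_isHomogeneous
  have e0 : (X 1 * X 1 - X 0 * (X 1 + X 1)) * rename hmap (pderiv 0 F)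
      + (X 1 * X 0 - X 1 * (X 1 + X 0)) * rename hmap (pderiv 1 F)
      + (X 0 * X 1 - X 1 * (X 0 + X 1)) * rename hmap (pderiv 2 F)
      = (0 : MvPolynomial (Fin 2) ℂ) := by
    have h1 : rename hmap (dH F) = 0 := by rw [hD, map_zero]
    rw [dH, V1, V2, V3] at h1
    simp only [map_add, map_mul, map_sub, rename_X, hmap0, hmap1, hmap2] at h1
    linear_combination h1
  have E : (X 1 - C 2 * X 0) * pderiv 0 (rename hmap F)
      = C ((0 : ℕ) : ℂ) * (rename hmap F) + X 1 * pderiv 1 (rename hmap F) := by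
    apply mul_left_cancel₀ (X_ne_zero (1 : Fin 2))
    rw [ch0, ch1]
    rw [show (C ((0:ℕ):ℂ) : MvPolynomial (Fin 2) ℂ) = 0 by simp]
    rw [show (C (2:ℂ) : MvPolynomial (Fin 2) ℂ) = 2 from map_ofNat _ 2]
    linear_combination e0
  exact dvd_of_rename_zero F (twoVar m _ 0 hf (by omega) E)

lemma rot0 : (finRotate 3) 0 = 1 := by decide
lemma rot1 : (finRotate 3) 1 = 2 := by decide
lemma rot2 : (finRotate 3) 2 = 0 := by decide

/-- The Halphen derivation commutes with the cyclic rotation of the variables. -/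
lemma dH_rename (F : MvPolynomial (Fin 3) ℂ) :
    dH (rename (⇑(finRotate 3)) F) = rename (⇑(finRotate 3)) (dH F) := by
  have p0 : pderiv 0 (rename (⇑(finRotate 3)) F) = rename (⇑(finRotate 3)) (pderiv 2 F) := by
    have := pderiv_rename (Equiv.injective (finRotate 3)) 2 F
    rwa [rot2] at this
  have p1 : pderiv 1 (rename (⇑(finRotate 3)) F) = rename (⇑(finRotate 3)) (pderiv 0 F) := by
    have := pderiv_rename (Equiv.injective (finRotate 3)) 0 F
    rwa [rot0] at this
  have p2 : pderiv 2 (rename (⇑(finRotate 3)) F) = rename (⇑(finRotate 3)) (pderiv 1 F) := by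
    have := pderiv_rename (Equiv.injective (finRotate 3)) 1 F
    rwa [rot1] at this
  have rv1 : rename (⇑(finRotate 3)) V1 = V2 := by
    rw [V1, V2]
    simp only [map_sub, map_mul, map_add, rename_X, rot0, rot1, rot2]
  have rv2 : rename (⇑(finRotate 3)) V2 = V3 := by
    rw [V2, V3]
    simp only [map_sub, map_mul, map_add, rename_X, rot0, rot1, rot2]
  have rv3 : rename (⇑(finRotate 3)) V3 = V1 := by
    rw [V3, V1]
    simp only [map_sub, map_mul, map_add, rename_X, rot0, rot1, rot2]
  rw [dH, dH, map_add, map_add, map_mul, map_mul, map_mul, rv1, rv2, rv3, p0, p1, p2]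
  ring

/-- If `F ∈ ℂ[x₁,x₂,x₃]` is an irreducible homogeneous Darboux
polynomial of the Halphen system with `d_H(F) = P·F` and `P = 0`, then `F` is constant;
in particular, no irreducible homogeneous Darboux polynomial of the Halphen system has
eigenvalue zero. -/
theorem halphen_no_zero_eigenvalue
    (F : MvPolynomial (Fin 3) ℂ) (m : ℕ) (hhom : F.IsHomogeneous m)
    (hirr : Irreducible F) (hD : dH F = 0 * F) :
    ∃ c : ℂ, F = C c := by
  rw [zero_mul] at hD
  rcases Nat.eq_zero_or_pos m with hm0 | hm
  · refine ⟨coeff 0 F, ?_⟩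
    ext n
    rw [coeff_C]
    by_cases hn : (0 : Fin 3 →₀ ℕ) = n
    · rw [if_pos hn, ← hn]
    · rw [if_neg hn]
      apply hhom.coeff_eq_zero
      rw [hm0]
      intro hc
      exact hn ((Finsupp.degree_eq_zero_iff n).mp hc).symm
  · exfalso
    have d1 : (X 1 - X 2 : MvPolynomial (Fin 3) ℂ) ∣ F := key F m hm hhom hD
    have d2' : (X 1 - X 2 : MvPolynomial (Fin 3) ℂ) ∣ rename (⇑(finRotate 3)) F :=
      key _ m hm hhom.rename_isHomogeneous (by rw [dH_rename, hD, map_zero])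
    have d2 : (X 0 - X 1 : MvPolynomial (Fin 3) ℂ) ∣ F := by
      have h := map_dvd (rename (⇑(finRotate 3).symm)) d2'
      rw [map_sub, rename_X, rename_X, rename_rename] at h
      rw [show ((finRotate 3).symm 1) = 0 from by decide,
        show ((finRotate 3).symm 2) = 1 from by decide] at h
      rw [show (⇑(finRotate 3).symm ∘ ⇑(finRotate 3)) = id from
        funext fun i => Equiv.symm_apply_apply _ i, rename_id] at h
      exact h
    obtain ⟨G, hG⟩ := d1
    rcases hirr.isUnit_or_isUnit hG with hu | hu
    · have h := hu.map (constantCoeff (σ := Fin 3) (R := ℂ))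
      rw [map_sub, constantCoeff_X, constantCoeff_X, sub_zero] at h
      exact not_isUnit_zero h
    · obtain ⟨u, hu⟩ := hu
      have hFdvd : F ∣ (X 1 - X 2 : MvPolynomial (Fin 3) ℂ) := by
        refine ⟨↑u⁻¹, ?_⟩
        rw [hG, ← hu, mul_assoc, Units.mul_inv, mul_one]
      obtain ⟨t, ht⟩ := d2.trans hFdvd
      have := congrArg (eval ![(0:ℂ), 0, 1]) ht
      simp at this
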